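/- Let δ > 0, Θ ≥ 0, θ > 0, λ, γ, r ∈ ℝ, and consider on ℝ × ℝ the product measure μ = γ̄(δ, Θ, θ) ⊗ N(0,1) with coordinates (R, ε). Set y = r + λ R + √R ε and M = exp(−ν₁ R − ν₂ y) / ∫ exp(−ν₁ R − ν₂ y) dμ for ν₁, ν₂ ∈ ℝ satisfying θ x(1−ν₂, −ν₁, 0) < 1 and θ x(−ν₂, −ν₁, 0) < 1, where x(z, b, c) = zλ + b + ((1/2) z² + γ² c − 2 c γ z)/(1 − 2c). Then the one-step no-arbitrage (risk-neutral pricing) condition ∫ M e^{y} dμ = e^{r} holds if and only if ν₂ = λ + 1/2. -/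

import Mathlib

open MeasureTheory ProbabilityTheory Real

/-- The noncentral gamma distribution `γ̄(δ, c, θ)` with shape `δ > 0`, noncentrality `c ≥ 0`
and scale `θ > 0`: the Poisson mixture `∑ₖ (e^{−c} cᵏ / k!) • Γ(δ + k, θ)`, where `Γ(a, θ)`
is the gamma distribution with shape `a` and rate `1/θ`. -/
noncomputable def ncGamma (δ c θ : ℝ) : Measure ℝ :=
  Measure.sum fun k : ℕ =>
    ENNReal.ofReal (Real.exp (-c) * c ^ k / Nat.factorial k) • gammaMeasure (δ + k) θ⁻¹

/-- `x(z, b, c) = zλ + b + ((1/2)z² + γ²c − 2cγz)/(1 − 2c)`. -/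
noncomputable def xfun (lam γ z b c : ℝ) : ℝ :=
  z * lam + b + ((1 / 2) * z ^ 2 + γ ^ 2 * c - 2 * c * γ * z) / (1 - 2 * c)

open scoped Nat

/-!
Both integrals in `∫ M e^y dμ` are exponential moments of `(R, √R ε)`. Conditionally on `R`,
`√R ε` is centred Gaussian with variance `R`, so `E[exp(bR + c√R ε)] = E[exp((b + c²/2)R)]`,
which is the moment generating function `φ(t) = (1 - θt)^{-δ} exp(Θ(1/(1 - θt) - 1))` of the
noncentral gamma law. Hence `∫ M e^y dμ = e^r φ(t₁)/φ(t₀)` with `t₁ = x(1 - ν₂, -ν₁, 0)` and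
`t₀ = x(-ν₂, -ν₁, 0)`, so `t₁ - t₀ = λ + 1/2 - ν₂`, and `φ` is strictly increasing on `θt < 1`.
-/

noncomputable def ncGammaMgf (δ Θ θ t : ℝ) : ℝ :=
  (1 - θ * t) ^ (-δ) * rexp (Θ * (1 / (1 - θ * t) - 1))

lemma ncGammaMgf_pos {δ Θ θ t : ℝ} (ht : θ * t < 1) : 0 < ncGammaMgf δ Θ θ t := by
  have : 0 < 1 - θ * t := by linarith
  unfold ncGammaMgf
  positivity

lemma lintegral_exp_mul_gaussianReal (m : ℝ) (v : NNReal) (t : ℝ) :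
    ∫⁻ x, ENNReal.ofReal (rexp (t * x)) ∂(gaussianReal m v)
      = ENNReal.ofReal (rexp (m * t + v * t ^ 2 / 2)) := by
  rw [← ofReal_integral_eq_lintegral_ofReal (integrable_exp_mul_gaussianReal t)
    (ae_of_all _ fun _ => (exp_pos _).le), ← congrFun mgf_fun_id_gaussianReal t, mgf]

lemma lintegral_exp_mul_gammaMeasure {a r t : ℝ} (ha : 0 < a) (hr : 0 < r) (ht : t < r) :
    ∫⁻ x, ENNReal.ofReal (rexp (t * x)) ∂(gammaMeasure a r)
      = ENNReal.ofReal ((r / (r - t)) ^ a) := by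
  have hrt : 0 < r - t := sub_pos.mpr ht
  have hmeas (s : ℝ) : Measurable (gammaPDF a s) := (measurable_gammaPDFReal a s).ennreal_ofReal
  -- `e^{tx}` times the rate-`r` density is `(r/(r-t))^a` times the rate-`(r-t)` density.
  have htilt : ∀ x, (gammaPDF a r * fun x => ENNReal.ofReal (rexp (t * x))) x
      = ENNReal.ofReal ((r / (r - t)) ^ a) * gammaPDF a (r - t) x := by
    intro x
    rcases lt_or_ge x 0 with hx | hx
    · simp [gammaPDF_of_neg hx]
    · have := Real.Gamma_pos_of_pos ha
      rw [Pi.mul_apply, gammaPDF_of_nonneg hx, gammaPDF_of_nonneg hx,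
        ← ENNReal.ofReal_mul (by positivity), ← ENNReal.ofReal_mul (by positivity),
        div_rpow hr.le hrt.le]
      congr 1
      have : (r - t) ^ a ≠ 0 := (rpow_pos_of_pos hrt a).ne'
      field_simp
      ring_nf
      rw [exp_add]
      ring
  rw [gammaMeasure, lintegral_withDensity_eq_lintegral_mul _ (hmeas r) (by fun_prop),
    lintegral_congr htilt, lintegral_const_mul _ (hmeas _), lintegral_gammaPDF_eq_one ha hrt,
    mul_one]

lemma lintegral_exp_mul_ncGamma {δ Θ θ t : ℝ} (hδ : 0 < δ) (hΘ : 0 ≤ Θ) (hθ : 0 < θ)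
    (ht : θ * t < 1) :
    ∫⁻ x, ENNReal.ofReal (rexp (t * x)) ∂(ncGamma δ Θ θ) = ENNReal.ofReal (ncGammaMgf δ Θ θ t) := by
  have hs : 0 < 1 - θ * t := by linarith
  set q := (1 - θ * t)⁻¹
  have hq : 0 < q := inv_pos.mpr hs
  have htr : t < θ⁻¹ := by rwa [← mul_one θ⁻¹, lt_inv_mul_iff₀ hθ]
  have hterm (k : ℕ) :
      ENNReal.ofReal (rexp (-Θ) * Θ ^ k / k !)
          * ∫⁻ x, ENNReal.ofReal (rexp (t * x)) ∂(gammaMeasure (δ + k) θ⁻¹)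
        = ENNReal.ofReal (rexp (-Θ) * q ^ δ * ((Θ * q) ^ k / k !)) := by
    have hratio : θ⁻¹ / (θ⁻¹ - t) = q := by
      simp only [q]
      field_simp
    rw [lintegral_exp_mul_gammaMeasure (by positivity) (inv_pos.mpr hθ) htr, hratio,
      ← ENNReal.ofReal_mul (by positivity), rpow_add hq, rpow_natCast, mul_pow]
    ring_nf
  rw [ncGamma, lintegral_sum_measure]
  simp_rw [lintegral_smul_measure, smul_eq_mul, hterm]
  rw [← ENNReal.ofReal_tsum_of_nonneg (fun k => by positivity)
      ((Real.summable_pow_div_factorial _).mul_left _), tsum_mul_left,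
    (NormedSpace.expSeries_div_hasSum_exp (Θ * q)).tsum_eq, ← Real.exp_eq_exp_ℝ, ncGammaMgf,
    rpow_neg hs.le, ← inv_rpow hs.le, one_div, mul_sub_one, exp_sub, exp_neg]
  congr 1
  ring

lemma ae_nonneg_ncGamma (δ Θ θ : ℝ) : ∀ᵐ x ∂(ncGamma δ Θ θ), 0 ≤ x := by
  have hgamma (k : ℕ) : gammaMeasure (δ + k) θ⁻¹ (Set.Iio 0) = 0 := by
    rw [gammaMeasure, withDensity_apply _ measurableSet_Iio]
    exact lintegral_gammaPDF_of_nonpos le_rfl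
  simp only [ae_iff, not_le]
  change ncGamma δ Θ θ (Set.Iio 0) = 0
  rw [ncGamma, Measure.sum_apply _ measurableSet_Iio]
  simp [hgamma]

lemma lintegral_exp_prod_gaussianReal {ν : Measure ℝ} (hν : ∀ᵐ x ∂ν, 0 ≤ x)
    (b c : ℝ) :
    ∫⁻ p, ENNReal.ofReal (rexp (b * p.1 + c * (√p.1 * p.2))) ∂(ν.prod (gaussianReal 0 1))
      = ∫⁻ x, ENNReal.ofReal (rexp ((b + c ^ 2 / 2) * x)) ∂ν := by
  rw [lintegral_prod _ (by fun_prop)]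
  refine lintegral_congr_ae (hν.mono fun x hx => ?_)
  have hsplit (e : ℝ) : ENNReal.ofReal (rexp (b * x + c * (√x * e)))
      = ENNReal.ofReal (rexp (b * x)) * ENNReal.ofReal (rexp (c * √x * e)) := by
    rw [← ENNReal.ofReal_mul (exp_nonneg _), ← exp_add, mul_assoc]
  simp_rw [hsplit]
  rw [lintegral_const_mul _ (by fun_prop), lintegral_exp_mul_gaussianReal,
    ← ENNReal.ofReal_mul (exp_nonneg _), ← exp_add, mul_pow, sq_sqrt hx, NNReal.coe_one]
  congr 2
  ring

lemma integral_exp_affine_ncGamma_prod {δ Θ θ : ℝ} (hδ : 0 < δ) (hΘ : 0 ≤ Θ) (hθ : 0 < θ)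
    (K b c : ℝ) (h : θ * (b + c ^ 2 / 2) < 1) :
    ∫ p, rexp (K + b * p.1 + c * (√p.1 * p.2)) ∂((ncGamma δ Θ θ).prod (gaussianReal 0 1))
      = rexp K * ncGammaMgf δ Θ θ (b + c ^ 2 / 2) := by
  simp only [add_assoc K, exp_add K]
  rw [integral_const_mul, integral_eq_lintegral_of_nonneg_ae (ae_of_all _ fun _ => exp_nonneg _)
      (by fun_prop), lintegral_exp_prod_gaussianReal (ae_nonneg_ncGamma δ Θ θ),
    lintegral_exp_mul_ncGamma hδ hΘ hθ h, ENNReal.toReal_ofReal (ncGammaMgf_pos h).le]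

lemma strictMonoOn_ncGammaMgf {δ Θ θ : ℝ} (hδ : 0 < δ) (hΘ : 0 ≤ Θ) (hθ : 0 < θ) :
    StrictMonoOn (ncGammaMgf δ Θ θ) {t | θ * t < 1} := by
  intro t₁ ht₁ t₂ ht₂ hlt
  simp only [Set.mem_ofPred_eq] at ht₁ ht₂
  have hs₂ : 0 < 1 - θ * t₂ := by linarith
  have hs : 1 - θ * t₂ < 1 - θ * t₁ := by nlinarith
  have hpow : (1 - θ * t₁) ^ (-δ) < (1 - θ * t₂) ^ (-δ) := rpow_lt_rpow_of_neg hs₂ hs (by linarith)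
  have hexp : rexp (Θ * (1 / (1 - θ * t₁) - 1)) ≤ rexp (Θ * (1 / (1 - θ * t₂) - 1)) := by
    gcongr
  exact mul_lt_mul hpow hexp (exp_pos _) (rpow_pos_of_pos hs₂ _).le

lemma xfun_zero (lam γ z b : ℝ) : xfun lam γ z b 0 = z * lam + b + z ^ 2 / 2 := by
  simp only [xfun]
  ring

/-- One-step no-arbitrage (risk-neutral pricing) condition for the LHARG
model: on `μ = γ̄(δ, Θ, θ) ⊗ N(0,1)` with coordinates `(R, ε)`, `y = r + λR + √R ε` and
SDF `M = exp(−ν₁R − ν₂y)/∫ exp(−ν₁R − ν₂y) dμ`, one has `∫ M e^y dμ = e^r` iff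
`ν₂ = λ + 1/2`. -/
theorem lharg_one_step_no_arbitrage_iff (δ Θ θ lam γ r ν₁ ν₂ : ℝ)
    (hδ : 0 < δ) (hΘ : 0 ≤ Θ) (hθ : 0 < θ)
    (hx1 : θ * xfun lam γ (1 - ν₂) (-ν₁) 0 < 1)
    (hx0 : θ * xfun lam γ (-ν₂) (-ν₁) 0 < 1) :
    let μ : Measure (ℝ × ℝ) := (ncGamma δ Θ θ).prod (gaussianReal 0 1)
    let y : ℝ × ℝ → ℝ := fun pt => r + lam * pt.1 + Real.sqrt pt.1 * pt.2
    let M : ℝ × ℝ → ℝ := fun pt =>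
      Real.exp (-ν₁ * pt.1 - ν₂ * y pt) / ∫ pt', Real.exp (-ν₁ * pt'.1 - ν₂ * y pt') ∂μ
    (∫ pt, M pt * Real.exp (y pt) ∂μ = Real.exp r) ↔ ν₂ = lam + 1 / 2 := by
  intro μ y M
  rw [xfun_zero] at hx0 hx1
  set Φ := ncGammaMgf δ Θ θ
  have hden : ∫ p, rexp (-ν₁ * p.1 - ν₂ * y p) ∂μ
      = rexp (-ν₂ * r) * Φ (-ν₂ * lam + -ν₁ + (-ν₂) ^ 2 / 2) := by
    rw [← integral_exp_affine_ncGamma_prod hδ hΘ hθ _ _ _ hx0]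
    congr with p
    simp only [y]
    congr 1
    ring
  have hnum : ∫ p, rexp (-ν₁ * p.1 - ν₂ * y p) * rexp (y p) ∂μ
      = rexp ((1 - ν₂) * r) * Φ ((1 - ν₂) * lam + -ν₁ + (1 - ν₂) ^ 2 / 2) := by
    rw [← integral_exp_affine_ncGamma_prod hδ hΘ hθ _ _ _ hx1]
    congr with p
    simp only [y, ← exp_add]
    congr 1
    ring
  have hΦ₀ : 0 < Φ (-ν₂ * lam + -ν₁ + (-ν₂) ^ 2 / 2) := ncGammaMgf_pos hx0
  simp only [M, div_mul_eq_mul_div]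
  rw [integral_div, hnum, hden, div_eq_iff (by positivity),
    show (1 - ν₂) * r = r + -ν₂ * r by ring, exp_add, mul_assoc,
    mul_right_inj' (exp_pos r).ne', mul_right_inj' (exp_pos _).ne',
    (strictMonoOn_ncGammaMgf hδ hΘ hθ).injOn.eq_iff hx1 hx0]
  constructor <;> intro h <;> linarith
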